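/- arXiv:1108.4707 — 6 statements merged into one kernel-verified Lean document; each statement's English description precedes it below -/
import Mathlib

section
/- Let f, g : (0,d) → ℝ be C¹, positive, strictly increasing functions. Suppose there is M > 0 such that x·(log f)'(x) ≤ M for all x ∈ (0,d). If f⁻¹(y) ≍ g⁻¹(y) as y → 0 (i.e., there exist constants 0 < A ≤ B and δ > 0 with A ≤ f⁻¹(y)/g⁻¹(y) ≤ B for y ∈ (0,δ)), then f(x) ≍ g(x) as x → 0. -/
open Set Filter Topology

/-- `F ≍ G` as the variable tends to `0⁺`. -/
def Comparable (F G : ℝ → ℝ) : Prop :=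
  ∃ A B : ℝ, 0 < A ∧ A ≤ B ∧ ∀ᶠ x in 𝓝[>] (0:ℝ), A ≤ F x / G x ∧ F x / G x ≤ B

/-!
The upper power condition `x (log f)' ≤ M` says that `log f - M log` is antitone, i.e.
`f b ≤ (b / a) ^ M f a` for `a ≤ b`; together with the monotonicity of `f` this bounds
`f y / f x` between `A ^ M` and `B ^ M` whenever `A x ≤ y ≤ B x` with `A ≤ 1 ≤ B`.
Now `x' := f⁻¹ (g x)` satisfies `f x' = g x`, and `x' / x = f⁻¹ (g x) / g⁻¹ (g x)` is bounded
above and below by the comparability of the inverses, so `f x / g x = f x / f x'` is bounded too.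
-/

lemma Comparable.exists_le_one_le {F G : ℝ → ℝ} (h : Comparable F G) :
    ∃ A B : ℝ, 0 < A ∧ A ≤ 1 ∧ 1 ≤ B ∧ ∀ᶠ x in 𝓝[>] (0:ℝ), F x / G x ∈ Icc A B := by
  obtain ⟨A, B, hA, -, hAB⟩ := h
  refine ⟨min A 1, max B 1, lt_min hA one_pos, min_le_right _ _, le_max_right _ _, ?_⟩
  filter_upwards [hAB] with x hx
  exact ⟨(min_le_left _ _).trans hx.1, hx.2.trans (le_max_left _ _)⟩

section UpperPowerCondition

variable {d M : ℝ} {f : ℝ → ℝ}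

lemma antitoneOn_log_sub_mul_log (hf : DifferentiableOn ℝ f (Ioo 0 d))
    (hfpos : ∀ x ∈ Ioo 0 d, 0 < f x) (hupper : ∀ x ∈ Ioo 0 d, x * deriv f x / f x ≤ M) :
    AntitoneOn (fun x => Real.log (f x) - M * Real.log x) (Ioo 0 d) := by
  have hderiv : ∀ x ∈ Ioo 0 d,
      HasDerivAt (fun x => Real.log (f x) - M * Real.log x) (deriv f x / f x - M / x) x := by
    intro x hx
    have hfx := (hf.differentiableAt (isOpen_Ioo.mem_nhds hx)).hasDerivAt
    exact ((hfx.log (hfpos x hx).ne').sub ((Real.hasDerivAt_log hx.1.ne').const_mul M)).congr_deriv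
      (by ring)
  refine antitoneOn_of_hasDerivWithinAt_nonpos (f' := fun x => deriv f x / f x - M / x)
    (convex_Ioo 0 d) (fun x hx => (hderiv x hx).continuousAt.continuousWithinAt) ?_ ?_ <;>
    rw [interior_Ioo]
  · exact fun x hx => (hderiv x hx).hasDerivWithinAt
  · intro x hx
    have hlog_deriv : deriv f x / f x ≤ M / x := by
      rw [le_div_iff₀ hx.1, div_mul_eq_mul_div, mul_comm]
      exact hupper x hx
    linarith

lemma le_div_rpow_mul_of_le (hf : DifferentiableOn ℝ f (Ioo 0 d))
    (hfpos : ∀ x ∈ Ioo 0 d, 0 < f x) (hupper : ∀ x ∈ Ioo 0 d, x * deriv f x / f x ≤ M)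
    {a b : ℝ} (ha : a ∈ Ioo 0 d) (hb : b ∈ Ioo 0 d) (hab : a ≤ b) :
    f b ≤ (b / a) ^ M * f a := by
  have hanti := antitoneOn_log_sub_mul_log hf hfpos hupper ha hb hab
  have hpow : 0 < (b / a) ^ M := Real.rpow_pos_of_pos (div_pos hb.1 ha.1) M
  rw [← Real.log_le_log_iff (hfpos b hb) (mul_pos hpow (hfpos a ha)),
    Real.log_mul hpow.ne' (hfpos a ha).ne', Real.log_rpow (div_pos hb.1 ha.1),
    Real.log_div hb.1.ne' ha.1.ne']
  linarith

end UpperPowerCondition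

lemma div_mem_Icc_rpow_of_mem_Icc_mul {s : Set ℝ} {f : ℝ → ℝ} {M A B x y : ℝ}
    (hmono : MonotoneOn f s) (hgrowth : ∀ a ∈ s, ∀ b ∈ s, a ≤ b → f b ≤ (b / a) ^ M * f a)
    (hM : 0 ≤ M) (hA : 0 < A) (hA1 : A ≤ 1) (hB1 : 1 ≤ B) (hx : x ∈ s) (hy : y ∈ s)
    (hx0 : 0 < x) (hfx : 0 < f x) (hxy : y ∈ Icc (A * x) (B * x)) :
    f y / f x ∈ Icc (A ^ M) (B ^ M) := by
  have hy0 : 0 < y := (mul_pos hA hx0).trans_le hxy.1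
  rcases le_total x y with hle | hle
  · have hfy : f y ≤ B ^ M * f x := calc
      f y ≤ (y / x) ^ M * f x := hgrowth x hx y hy hle
      _ ≤ B ^ M * f x := by
        gcongr
        rw [div_le_iff₀ hx0]
        exact hxy.2
    constructor
    · rw [le_div_iff₀ hfx]
      calc A ^ M * f x ≤ 1 * f x := by gcongr; exact Real.rpow_le_one hA.le hA1 hM
        _ ≤ f y := by rw [one_mul]; exact hmono hx hy hle
    · rwa [div_le_iff₀ hfx]
  · have hfx_le : f x ≤ (x / y) ^ M * f y := hgrowth y hy x hx hle
    constructor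
    · rw [le_div_iff₀ hfx]
      calc A ^ M * f x ≤ (y / x) ^ M * ((x / y) ^ M * f y) := by
            gcongr
            rw [le_div_iff₀ hx0]
            exact hxy.1
        _ = f y := by
            rw [← mul_assoc, ← Real.mul_rpow (by positivity) (by positivity),
              div_mul_div_cancel₀ hx0.ne', div_self hy0.ne', Real.one_rpow, one_mul]
    · rw [div_le_iff₀ hfx]
      calc f y ≤ 1 * f x := by rw [one_mul]; exact hmono hy hx hle
        _ ≤ B ^ M * f x := by gcongr; exact Real.one_le_rpow hB1 hM

theorem inverse_property_ia_general
    (d M : ℝ) (hd : 0 < d) (hM : 0 < M) (f g fi gi : ℝ → ℝ)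
    (hf : ContDiffOn ℝ 1 f (Ioo 0 d))
    (hfpos : ∀ x ∈ Ioo 0 d, 0 < f x) (hgpos : ∀ x ∈ Ioo 0 d, 0 < g x)
    (hfmono : StrictMonoOn f (Ioo 0 d)) (hgmono : StrictMonoOn g (Ioo 0 d))
    (hg0 : Tendsto g (𝓝[>] 0) (𝓝 0))
    (hupper : ∀ x ∈ Ioo 0 d, x * deriv f x / f x ≤ M)
    (hfi : ∀ᶠ y in 𝓝[>] (0:ℝ), fi y ∈ Ioo 0 d ∧ f (fi y) = y)
    (hgi : ∀ᶠ y in 𝓝[>] (0:ℝ), gi y ∈ Ioo 0 d ∧ g (gi y) = y)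
    (hcomp : Comparable fi gi) :
    Comparable f g := by
  obtain ⟨A, B, hA, hA1, hB1, hinv⟩ := hcomp.exists_le_one_le
  have hB : 0 < B := hA.trans_le (hA1.trans hB1)
  refine ⟨B⁻¹ ^ M, A⁻¹ ^ M, by positivity, by gcongr; exact hA1.trans hB1, ?_⟩
  have hIoo : ∀ᶠ x in 𝓝[>] (0:ℝ), x ∈ Ioo 0 d := Ioo_mem_nhdsGT hd
  have hg_within : Tendsto g (𝓝[>] 0) (𝓝[>] 0) :=
    tendsto_nhdsWithin_of_tendsto_nhds_of_eventually_within g hg0 (hIoo.mono hgpos)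
  filter_upwards [hIoo, hg_within.eventually (hfi.and (hgi.and hinv))]
    with x hx ⟨⟨hfi_mem, hf_fi⟩, ⟨hgi_mem, hg_gi⟩, hratio⟩
  rw [hgmono.injOn hgi_mem hx hg_gi] at hratio
  have hx_mem : x ∈ Icc (B⁻¹ * fi (g x)) (A⁻¹ * fi (g x)) := by
    rw [mem_Icc, inv_mul_eq_div, inv_mul_eq_div, div_le_iff₀ hB, le_div_iff₀ hA, mul_comm x,
      mul_comm x]
    exact ⟨(div_le_iff₀ hx.1).1 hratio.2, (le_div_iff₀ hx.1).1 hratio.1⟩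
  have hf_diff := hf.differentiableOn one_ne_zero
  rw [← hf_fi]
  exact div_mem_Icc_rpow_of_mem_Icc_mul hfmono.monotoneOn
    (fun a ha b hb => le_div_rpow_mul_of_le hf_diff hfpos hupper ha hb) hM.le
    (inv_pos.2 hB) (inv_le_one_of_one_le₀ hB1) (one_le_inv₀ hA |>.2 hA1) hfi_mem hx
    hfi_mem.1 (hfpos _ hfi_mem) hx_mem

/-- Lemma (inverse property) i)(a): under the upper power condition,
comparability of the inverses implies comparability of the functions. -/
theorem inverse_property_ia
    (d M : ℝ) (hd : 0 < d) (hM : 0 < M) (f g fi gi : ℝ → ℝ)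
    (hf : ContDiffOn ℝ 1 f (Ioo 0 d)) (hg : ContDiffOn ℝ 1 g (Ioo 0 d))
    (hfpos : ∀ x ∈ Ioo 0 d, 0 < f x) (hgpos : ∀ x ∈ Ioo 0 d, 0 < g x)
    (hfmono : StrictMonoOn f (Ioo 0 d)) (hgmono : StrictMonoOn g (Ioo 0 d))
    (hf0 : Tendsto f (𝓝[>] 0) (𝓝 0)) (hg0 : Tendsto g (𝓝[>] 0) (𝓝 0))
    (hupper : ∀ x ∈ Ioo 0 d, x * deriv f x / f x ≤ M)
    (hfi : ∀ᶠ y in 𝓝[>] (0:ℝ), fi y ∈ Ioo 0 d ∧ f (fi y) = y)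
    (hgi : ∀ᶠ y in 𝓝[>] (0:ℝ), gi y ∈ Ioo 0 d ∧ g (gi y) = y)
    (hcomp : Comparable fi gi) :
    Comparable f g :=
  inverse_property_ia_general d M hd hM f g fi gi hf hfpos hgpos hfmono hgmono hg0 hupper hfi hgi
    hcomp
end

section
/- Let f, g : (0,d) → ℝ be C¹, positive, strictly increasing functions tending to 0 at 0. Suppose there is m > 0 such that m ≤ x·(log f)'(x) on (0,d). If f(x) ≍ g(x) as x → 0, then f⁻¹(y) ≍ g⁻¹(y) as y → 0. -/
open Set Filter Topology

/-!
The lower power condition says that `log f - m log` is nondecreasing, i.e. `f` grows at least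
like `x ^ m`: `(x₂ / x₁) ^ m ≤ f x₂ / f x₁` for `x₁ ≤ x₂`. Taking `x₁ = f⁻¹ y` and `x₂ = g⁻¹ y`
(or the reverse), the right-hand side is `f (g⁻¹ y) / g (g⁻¹ y)` or its inverse, which is bounded
once `g⁻¹ y` is small; hence `f⁻¹ y / g⁻¹ y` is bounded above and below by `m`-th roots of the
comparability constants.
-/

theorem monotoneOn_log_sub_mul_log {d m : ℝ} {f : ℝ → ℝ}
    (hf : DifferentiableOn ℝ f (Ioo 0 d)) (hfpos : ∀ x ∈ Ioo 0 d, 0 < f x)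
    (hlower : ∀ x ∈ Ioo 0 d, m ≤ x * deriv f x / f x) :
    MonotoneOn (fun x ↦ Real.log (f x) - m * Real.log x) (Ioo 0 d) := by
  have hderiv : ∀ x ∈ Ioo 0 d, HasDerivAt (fun x ↦ Real.log (f x) - m * Real.log x)
      (deriv f x / f x - m * x⁻¹) x := fun x hx ↦
    ((hf.differentiableAt (isOpen_Ioo.mem_nhds hx)).hasDerivAt.log (hfpos x hx).ne').sub
      ((Real.hasDerivAt_log hx.1.ne').const_mul m)
  refine monotoneOn_of_hasDerivWithinAt_nonneg (convex_Ioo 0 d)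
    (fun x hx ↦ (hderiv x hx).continuousAt.continuousWithinAt)
    (fun x hx ↦ (hderiv x (interior_subset hx)).hasDerivWithinAt) fun x hx ↦ ?_
  rw [interior_Ioo] at hx
  have h := hlower x hx
  rw [mul_div_assoc, ← div_le_iff₀' hx.1] at h
  rw [sub_nonneg, ← div_eq_mul_inv]
  exact h

theorem rpow_div_le_div_of_le_mul_deriv_div {d m : ℝ} {f : ℝ → ℝ}
    (hf : DifferentiableOn ℝ f (Ioo 0 d)) (hfpos : ∀ x ∈ Ioo 0 d, 0 < f x)
    (hlower : ∀ x ∈ Ioo 0 d, m ≤ x * deriv f x / f x)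
    ⦃x y : ℝ⦄ (hx : x ∈ Ioo 0 d) (hy : y ∈ Ioo 0 d) (hxy : x ≤ y) :
    (y / x) ^ m ≤ f y / f x := by
  have hmono := monotoneOn_log_sub_mul_log hf hfpos hlower hx hy hxy
  have hyx : 0 < y / x := div_pos hy.1 hx.1
  have hfx := hfpos x hx
  have hfy := hfpos y hy
  rw [← Real.log_le_log_iff (by positivity) (by positivity), Real.log_rpow hyx,
    Real.log_div hy.1.ne' hx.1.ne', Real.log_div hfy.ne' hfx.ne']
  linarith

theorem div_le_max_one_rpow_inv {m x y a : ℝ} (hm : 0 < m) (hx : 0 < x) (hy : 0 < y)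
    (ha : 0 ≤ a) (h : y < x → (x / y) ^ m ≤ a) : x / y ≤ max 1 (a ^ m⁻¹) := by
  rcases le_or_gt x y with hxy | hxy
  · exact le_max_of_le_left ((div_le_one hy).2 hxy)
  · exact le_max_of_le_right ((Real.le_rpow_inv_iff_of_pos (by positivity) ha hm).2 (h hxy))

theorem min_one_rpow_inv_inv_le_div {m x y b : ℝ} (hm : 0 < m) (hx : 0 < x) (hy : 0 < y)
    (hb : 0 ≤ b) (h : x < y → (y / x) ^ m ≤ b) : min 1 (b ^ m⁻¹)⁻¹ ≤ x / y := by
  rcases le_or_gt y x with hxy | hxy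
  · exact min_le_of_left_le ((one_le_div hy).2 hxy)
  · refine min_le_of_right_le ?_
    rw [← inv_div]
    exact inv_anti₀ (by positivity)
      ((Real.le_rpow_inv_iff_of_pos (by positivity) hb hm).2 (h hxy))

theorem tendsto_nhdsGT_zero_of_rightInverse {d : ℝ} (hd : 0 < d) {g gi : ℝ → ℝ}
    (hgpos : ∀ x ∈ Ioo 0 d, 0 < g x) (hgmono : MonotoneOn g (Ioo 0 d))
    (hgi : ∀ᶠ y in 𝓝[>] (0:ℝ), gi y ∈ Ioo 0 d ∧ g (gi y) = y) :
    Tendsto gi (𝓝[>] 0) (𝓝[>] 0) := by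
  refine tendsto_nhdsWithin_iff.2 ⟨tendsto_order.2 ⟨fun a ha ↦ ?_, fun ε hε ↦ ?_⟩, ?_⟩
  · filter_upwards [hgi] with y hy using ha.trans hy.1.1
  · have hε' : min ε (d / 2) ∈ Ioo 0 d := ⟨by positivity, (min_le_right _ _).trans_lt (by linarith)⟩
    filter_upwards [hgi, Ioo_mem_nhdsGT (hgpos _ hε')] with y hy hyε
    by_contra! hle
    have := hgmono hε' hy.1 ((min_le_left _ _).trans hle)
    rw [hy.2] at this
    exact this.not_gt hyε.2
  · filter_upwards [hgi] with y hy using hy.1.1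

theorem inverse_property_ii_general
    (d m : ℝ) (hd : 0 < d) (hm : 0 < m) (f g fi gi : ℝ → ℝ)
    (hf : ContDiffOn ℝ 1 f (Ioo 0 d))
    (hfpos : ∀ x ∈ Ioo 0 d, 0 < f x) (hgpos : ∀ x ∈ Ioo 0 d, 0 < g x)
    (hgmono : StrictMonoOn g (Ioo 0 d))
    (hlower : ∀ x ∈ Ioo 0 d, m ≤ x * deriv f x / f x)
    (hfi : ∀ᶠ y in 𝓝[>] (0:ℝ), fi y ∈ Ioo 0 d ∧ f (fi y) = y)
    (hgi : ∀ᶠ y in 𝓝[>] (0:ℝ), gi y ∈ Ioo 0 d ∧ g (gi y) = y)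
    (hcomp : Comparable f g) :
    Comparable fi gi := by
  obtain ⟨A, B, hA, hAB, hev⟩ := hcomp
  have hgrowth :=
    rpow_div_le_div_of_le_mul_deriv_div (hf.differentiableOn one_ne_zero) hfpos hlower
  have hev' := (tendsto_nhdsGT_zero_of_rightInverse hd hgpos hgmono.monotoneOn hgi).eventually hev
  have hB : 0 < B := hA.trans_le hAB
  refine ⟨min 1 (B ^ m⁻¹)⁻¹, max 1 ((A⁻¹) ^ m⁻¹),
    lt_min one_pos (by positivity), (min_le_left _ _).trans (le_max_left _ _), ?_⟩
  filter_upwards [hfi, hgi, hev'] with y ⟨hx₁, hfx₁⟩ ⟨hx₂, hgx₂⟩ hbound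
  rw [hgx₂] at hbound
  refine ⟨min_one_rpow_inv_inv_le_div hm hx₁.1 hx₂.1 hB.le fun hlt ↦ ?_,
    div_le_max_one_rpow_inv hm hx₁.1 hx₂.1 (inv_pos.2 hA).le fun hlt ↦ ?_⟩
  · calc (gi y / fi y) ^ m ≤ f (gi y) / f (fi y) := hgrowth hx₁ hx₂ hlt.le
      _ = f (gi y) / y := by rw [hfx₁]
      _ ≤ B := hbound.2
  · calc (fi y / gi y) ^ m ≤ f (fi y) / f (gi y) := hgrowth hx₂ hx₁ hlt.le
      _ = (f (gi y) / y)⁻¹ := by rw [hfx₁, inv_div]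
      _ ≤ A⁻¹ := inv_anti₀ hA hbound.1

/-- Lemma (inverse property) ii): under the lower power condition on `f`,
comparability of the functions implies comparability of the inverses. -/
theorem inverse_property_ii
    (d m : ℝ) (hd : 0 < d) (hm : 0 < m) (f g fi gi : ℝ → ℝ)
    (hf : ContDiffOn ℝ 1 f (Ioo 0 d)) (hg : ContDiffOn ℝ 1 g (Ioo 0 d))
    (hfpos : ∀ x ∈ Ioo 0 d, 0 < f x) (hgpos : ∀ x ∈ Ioo 0 d, 0 < g x)
    (hfmono : StrictMonoOn f (Ioo 0 d)) (hgmono : StrictMonoOn g (Ioo 0 d))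
    (hf0 : Tendsto f (𝓝[>] 0) (𝓝 0)) (hg0 : Tendsto g (𝓝[>] 0) (𝓝 0))
    (hlower : ∀ x ∈ Ioo 0 d, m ≤ x * deriv f x / f x)
    (hfi : ∀ᶠ y in 𝓝[>] (0:ℝ), fi y ∈ Ioo 0 d ∧ f (fi y) = y)
    (hgi : ∀ᶠ y in 𝓝[>] (0:ℝ), gi y ∈ Ioo 0 d ∧ g (gi y) = y)
    (hcomp : Comparable f g) :
    Comparable fi gi :=
  inverse_property_ii_general d m hd hm f g fi gi hf hfpos hgpos hgmono hlower hfi hgi hcomp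
end

section
/- The functions f(x) = e^{-1/(2x)} and g(x) = e^{-1/x} on (0,1) satisfy lim_{x→0} f(x)/g(x) = +∞, yet their inverses f⁻¹(y) = -1/(2·log y) and g⁻¹(y) = -1/log y are comparable: f⁻¹(y)/g⁻¹(y) = 1/2 for all y ∈ (0,1). Hence the conclusion of the inverse property fails without the upper power condition. -/
open Set Filter Topology

/- Halving the argument of `-1 / x` multiplies `exp (-1 / x)` by the unbounded factor
`exp (1 / (2x))`, but multiplies the inverse `-1 / log y` only by the constant `1 / 2`. -/

theorem tendsto_exp_div_nhdsGT_zero_atTop {c : ℝ} (hc : 0 < c) :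
    Tendsto (fun x : ℝ => Real.exp (c / x)) (𝓝[>] 0) atTop := by
  have h : Tendsto (fun x : ℝ => c / x) (𝓝[>] 0) atTop := by
    simpa only [div_eq_mul_inv] using tendsto_inv_nhdsGT_zero.const_mul_atTop hc
  exact Real.tendsto_exp_atTop.comp h

theorem exp_neg_one_div_mul_div_exp_neg_one_div (c x : ℝ) :
    Real.exp (-1 / (c * x)) / Real.exp (-1 / x) = Real.exp ((1 - c⁻¹) / x) := by
  rw [← Real.exp_sub]
  ring_nf

theorem neg_one_div_neg_one_div (t : ℝ) : -1 / (-1 / t) = t := by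
  rw [div_div_eq_mul_div, neg_one_mul, neg_div_neg_eq, div_one]

theorem exp_neg_one_div_neg_one_div_log {y : ℝ} (hy : 0 < y) :
    Real.exp (-1 / (-1 / Real.log y)) = y := by
  rw [neg_one_div_neg_one_div, Real.exp_log hy]

theorem mul_neg_one_div_mul {c : ℝ} (hc : c ≠ 0) (t : ℝ) : c * (-1 / (c * t)) = -1 / t := by
  rw [mul_div_assoc', mul_div_mul_left _ _ hc]

theorem neg_one_div_mul_div_neg_one_div {t : ℝ} (c : ℝ) (ht : t ≠ 0) :
    (-1 / (c * t)) / (-1 / t) = 1 / c := by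
  field_simp

/-- Counterexample showing the upper power condition is necessary in the inverse property:
`f(x) = e^{-1/(2x)}` and `g(x) = e^{-1/x}` satisfy `f/g → +∞` as `x → 0⁺`, yet their
inverses `f⁻¹(y) = -1/(2 log y)` and `g⁻¹(y) = -1/log y` have constant ratio `1/2`. -/
theorem flat_counterexample :
    let f : ℝ → ℝ := fun x => Real.exp (-1 / (2 * x))
    let g : ℝ → ℝ := fun x => Real.exp (-1 / x)
    Tendsto (fun x => f x / g x) (𝓝[>] 0) atTop ∧
    (∀ y ∈ Ioo (0:ℝ) 1, f (-1 / (2 * Real.log y)) = y) ∧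
    (∀ y ∈ Ioo (0:ℝ) 1, g (-1 / Real.log y) = y) ∧
    (∀ y ∈ Ioo (0:ℝ) 1, (-1 / (2 * Real.log y)) / (-1 / Real.log y) = 1 / 2) := by
  intro f g
  refine ⟨?_, fun y hy => ?_, fun y hy => exp_neg_one_div_neg_one_div_log hy.1,
    fun y hy => neg_one_div_mul_div_neg_one_div 2 (Real.log_neg hy.1 hy.2).ne⟩
  · simp only [f, g, exp_neg_one_div_mul_div_exp_neg_one_div]
    exact tendsto_exp_div_nhdsGT_zero_atTop (by norm_num)
  · simp only [f]
    rw [mul_neg_one_div_mul two_ne_zero, exp_neg_one_div_neg_one_div_log hy.1]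
end

section
/- Let g(x) = kx with 0 < k < 1, let x₀ > 0 and let S = {k^n x₀ : n ∈ ℕ} be the orbit of x₀ under g. Then the length |A_ε(S)| of the ε-neighborhood of S satisfies |A_ε(S)| ≍ ε·(-log ε) as ε → 0, i.e., there exist constants 0 < A ≤ B and ε₀ > 0 with A ≤ |A_ε(S)|/(ε·(-log ε)) ≤ B for 0 < ε < ε₀. -/
/-!
Write `L = -log k`. The orbit points `kⁿ x₀` with `kⁿ x₀ (1 - k) > 2ε` are pairwise more than
`2ε` apart, and there are about `log (1/ε) / L` of them, so their disjoint `ε`-balls already have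
total length `≳ ε log (1/ε) / L`. Conversely, once `kᴺ ≤ ε` (so `N ≈ log (1/ε) / L`), the rest of
the orbit lies in `[0, ε x₀]`, and the `ε`-neighborhood is covered by `N` intervals of length `2ε`
and one interval of length `O(ε)`.
-/

open Set Filter Topology MeasureTheory

/-- The length of the `ε`-neighborhood of a set `U ⊆ ℝ`. -/
noncomputable def nbdLength (U : Set ℝ) (ε : ℝ) : ℝ :=
  (volume (Metric.cthickening ε U)).toReal

open Metric Real

theorem sum_measure_closedBall_le_measure_cthickening {X ι : Type*} [PseudoMetricSpace X]
    [MeasurableSpace X] [OpensMeasurableSpace X] (μ : Measure X) {U : Set X} {ε : ℝ}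
    {s : Finset ι} {f : ι → X} (hfU : ∀ i ∈ s, f i ∈ U)
    (hsep : (s : Set ι).Pairwise fun i j => ε + ε < dist (f i) (f j)) :
    ∑ i ∈ s, μ (closedBall (f i) ε) ≤ μ (cthickening ε U) := by
  rw [← measure_biUnion_finset
    (fun i hi j hj hij => closedBall_disjoint_closedBall (hsep hi hj hij))
    fun i _ => measurableSet_closedBall]
  exact measure_mono (iUnion₂_subset fun i hi => closedBall_subset_cthickening (hfU i hi) ε)

theorem measure_cthickening_le_of_subset_union_image {X ι : Type*} [PseudoMetricSpace X]
    [MeasurableSpace X] (μ : Measure X) {U V : Set X} {ε : ℝ} (hε : 0 ≤ ε)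
    {s : Finset ι} {f : ι → X} (hU : U ⊆ V ∪ f '' s) :
    μ (cthickening ε U) ≤ μ (cthickening ε V) + ∑ i ∈ s, μ (closedBall (f i) ε) := by
  have hfinite : cthickening ε (f '' s) = ⋃ i ∈ s, closedBall (f i) ε := by
    rw [(s.finite_toSet.image f).isCompact.cthickening_eq_biUnion_closedBall hε, biUnion_image,
      Finset.set_biUnion_coe]
  calc μ (cthickening ε U) ≤ μ (cthickening ε V ∪ cthickening ε (f '' s)) := by
        rw [← cthickening_union]
        exact measure_mono (cthickening_subset_of_subset ε hU)
    _ ≤ μ (cthickening ε V) + μ (cthickening ε (f '' s)) := measure_union_le _ _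
    _ ≤ μ (cthickening ε V) + ∑ i ∈ s, μ (closedBall (f i) ε) := by
        rw [hfinite]
        gcongr
        exact measure_biUnion_finset_le _ _

theorem pow_mul_one_sub_le_pow_sub_pow {k : ℝ} (hk0 : 0 ≤ k) (hk1 : k ≤ 1) {n m M : ℕ}
    (hnm : n < m) (hmM : m ≤ M) : k ^ M * (1 - k) ≤ k ^ n - k ^ m := by
  obtain ⟨j, rfl⟩ : ∃ j, m = j + 1 := ⟨m - 1, by omega⟩
  have hnj : k ^ j ≤ k ^ n := pow_le_pow_of_le_one hk0 hk1 (by omega)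
  have hjM : k ^ M ≤ k ^ j := pow_le_pow_of_le_one hk0 hk1 (by omega)
  rw [pow_succ]
  nlinarith

def linearOrbit (k x₀ : ℝ) : Set ℝ := {y | ∃ n : ℕ, y = k ^ n * x₀}

section linearOrbit

variable {k x₀ ε : ℝ}

theorem linearOrbit_subset_closedBall_union (hk0 : 0 ≤ k) (hk1 : k ≤ 1) (hx₀ : 0 ≤ x₀) (N : ℕ) :
    linearOrbit k x₀ ⊆ closedBall 0 (k ^ N * x₀) ∪ (fun n => k ^ n * x₀) '' Finset.range N := by
  rintro _ ⟨n, rfl⟩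
  rcases lt_or_ge n N with hn | hn
  · exact Or.inr ⟨n, Finset.mem_range.2 hn, rfl⟩
  · left
    rw [mem_closedBall_zero_iff, norm_of_nonneg (by positivity)]
    exact mul_le_mul_of_nonneg_right (pow_le_pow_of_le_one hk0 hk1 hn) hx₀

theorem volume_cthickening_linearOrbit_le (hk0 : 0 ≤ k) (hk1 : k ≤ 1) (hx₀ : 0 ≤ x₀)
    (hε : 0 ≤ ε) (N : ℕ) :
    volume (cthickening ε (linearOrbit k x₀)) ≤
      ENNReal.ofReal (2 * (ε + k ^ N * x₀) + N * (2 * ε)) := by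
  refine (measure_cthickening_le_of_subset_union_image volume hε
    (linearOrbit_subset_closedBall_union hk0 hk1 hx₀ N)).trans_eq ?_
  rw [cthickening_closedBall hε (by positivity)]
  simp only [Real.volume_closedBall, Finset.sum_const, Finset.card_range, nsmul_eq_mul]
  rw [← ENNReal.ofReal_natCast, ← ENNReal.ofReal_mul (by positivity),
    ← ENNReal.ofReal_add (by positivity) (by positivity)]

theorem nbdLength_linearOrbit_le (hk0 : 0 ≤ k) (hk1 : k ≤ 1) (hx₀ : 0 ≤ x₀) (hε : 0 ≤ ε)
    (N : ℕ) : nbdLength (linearOrbit k x₀) ε ≤ 2 * (ε + k ^ N * x₀) + N * (2 * ε) :=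
  ENNReal.toReal_le_of_le_ofReal (by positivity)
    (volume_cthickening_linearOrbit_le hk0 hk1 hx₀ hε N)

theorem le_nbdLength_linearOrbit (hk0 : 0 ≤ k) (hk1 : k ≤ 1) (hx₀ : 0 ≤ x₀) (hε : 0 ≤ ε)
    {M : ℕ} (hM : 2 * ε < k ^ M * x₀ * (1 - k)) :
    (M + 1) * (2 * ε) ≤ nbdLength (linearOrbit k x₀) ε := by
  have hsep : ∀ n m, n < m → m ≤ M → ε + ε < dist (k ^ n * x₀) (k ^ m * x₀) := by
    intro n m hnm hmM
    have := mul_le_mul_of_nonneg_right (pow_mul_one_sub_le_pow_sub_pow hk0 hk1 hnm hmM) hx₀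
    rw [Real.dist_eq]
    linarith [le_abs_self (k ^ n * x₀ - k ^ m * x₀)]
  have hvol := sum_measure_closedBall_le_measure_cthickening volume
    (s := Finset.range (M + 1)) (f := fun n => k ^ n * x₀) (U := linearOrbit k x₀)
    (fun n _ => ⟨n, rfl⟩) (by
      intro n hn m hm hnm
      simp only [Finset.coe_range, mem_Iio] at hn hm
      rcases hnm.lt_or_gt with h | h
      · exact hsep n m h (by omega)
      · exact dist_comm (k ^ m * x₀) _ ▸ hsep m n h (by omega))
  simp only [Real.volume_closedBall, Finset.sum_const, Finset.card_range, nsmul_eq_mul] at hvol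
  rw [← ENNReal.ofReal_natCast, ← ENNReal.ofReal_mul (by positivity)] at hvol
  have hfin := (volume_cthickening_linearOrbit_le hk0 hk1 hx₀ hε 0).trans_lt ENNReal.ofReal_lt_top
  have := ENNReal.toReal_mono hfin.ne hvol
  rwa [ENNReal.toReal_ofReal (by positivity), Nat.cast_succ] at this

theorem nbdLength_linearOrbit_le_mul_neg_log (hk0 : 0 < k) (hk1 : k < 1) (hx₀ : 0 ≤ x₀)
    (hε : 0 < ε) (hε1 : 1 ≤ -log ε) :
    nbdLength (linearOrbit k x₀) ε ≤ (2 * (x₀ + 2) + 2 / (-log k)) * (ε * -log ε) := by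
  have hL : 0 < -log k := neg_pos.2 (log_neg hk0 hk1)
  have hε1' : ε ≤ 1 := ((log_neg_iff hε).1 (by linarith)).le
  obtain ⟨n, hnε, hεn⟩ := exists_nat_pow_near_of_lt_one hε hε1' hk0 hk1
  have hn : n ≤ -log ε / (-log k) := by
    rw [le_div_iff₀ hL]
    have := log_le_log hε hεn
    rw [log_pow] at this
    linarith
  calc nbdLength (linearOrbit k x₀) ε
      ≤ 2 * (ε + k ^ (n + 1) * x₀) + ((n + 1 : ℕ) : ℝ) * (2 * ε) :=
        nbdLength_linearOrbit_le hk0.le hk1.le hx₀ hε.le (n + 1)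
    _ ≤ 2 * (ε + ε * x₀) + (n + 1) * (2 * ε) := by
        push_cast
        gcongr
    _ = 2 * (x₀ + 2) * ε + 2 * ε * n := by ring
    _ ≤ 2 * (x₀ + 2) * ε * (-log ε) + 2 * ε * (-log ε / (-log k)) := by
        exact add_le_add (le_mul_of_one_le_right (by positivity) hε1) (by gcongr)
    _ = (2 * (x₀ + 2) + 2 / (-log k)) * (ε * -log ε) := by ring

theorem inv_neg_log_mul_le_nbdLength_linearOrbit (hk0 : 0 < k) (hk1 : k < 1) (hx₀ : 0 < x₀)
    (hε : 0 < ε) (hεc : ε ≤ x₀ * (1 - k) / 3) (hεc2 : ε ≤ (x₀ * (1 - k) / 3) ^ 2) :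
    1 / (-log k) * (ε * -log ε) ≤ nbdLength (linearOrbit k x₀) ε := by
  set c := x₀ * (1 - k) / 3
  have hL : 0 < -log k := neg_pos.2 (log_neg hk0 hk1)
  have hc : 0 < c := by have := sub_pos.2 hk1; positivity
  -- dividing by 3 rather than 2 makes the first `M + 1` orbit points strictly more than `2ε` apart
  obtain ⟨M, hMε, hεM⟩ :=
    exists_nat_pow_near_of_lt_one (div_pos hε hc) ((div_le_one hc).2 hεc) hk0 hk1
  have hsep : 2 * ε < k ^ M * x₀ * (1 - k) := by
    have h3c : k ^ M * c * 3 = k ^ M * x₀ * (1 - k) := by ring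
    rw [div_le_iff₀ hc] at hεM
    linarith
  have hlogM : log (c / ε) ≤ (M + 1) * (-log k) := by
    have := log_le_log (pow_pos hk0 _) hMε.le
    rw [log_pow, ← neg_le_neg_iff, ← log_inv, inv_div] at this
    push_cast at this
    linarith
  have hlogc : -log ε ≤ 2 * log (c / ε) := by
    have := log_le_log hε hεc2
    rw [log_pow, Nat.cast_ofNat] at this
    rw [log_div hc.ne' hε.ne']
    linarith
  calc 1 / (-log k) * (ε * -log ε)
      ≤ 1 / (-log k) * (ε * (2 * ((M + 1) * (-log k)))) := by gcongr; linarith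
    _ = (M + 1) * (2 * ε) := by field_simp [(log_neg hk0 hk1).ne]
    _ ≤ nbdLength (linearOrbit k x₀) ε := le_nbdLength_linearOrbit hk0.le hk1.le hx₀.le hε.le hsep

end linearOrbit

/-- For the linear map `g(x) = kx`, `0 < k < 1`, the length of the `ε`-neighborhood
of the orbit `S = {kⁿ x₀}` satisfies `|A_ε(S)| ≍ ε·(-log ε)` as `ε → 0`. -/
theorem eps_neighborhood_linear_orbit
    (k x₀ : ℝ) (hk : k ∈ Ioo (0:ℝ) 1) (hx₀ : 0 < x₀) :
    ∃ A B ε₀ : ℝ, 0 < A ∧ A ≤ B ∧ 0 < ε₀ ∧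
      ∀ ε ∈ Ioo 0 ε₀,
        A ≤ nbdLength {y : ℝ | ∃ n : ℕ, y = k ^ n * x₀} ε / (ε * (-Real.log ε)) ∧
        nbdLength {y : ℝ | ∃ n : ℕ, y = k ^ n * x₀} ε / (ε * (-Real.log ε)) ≤ B := by
  obtain ⟨hk0, hk1⟩ := hk
  set c := x₀ * (1 - k) / 3
  have hL : 0 < -log k := neg_pos.2 (log_neg hk0 hk1)
  have hc : 0 < c := by have := sub_pos.2 hk1; positivity
  refine ⟨1 / (-log k), 2 * (x₀ + 2) + 2 / (-log k), min (exp (-1)) (min c (c ^ 2)),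
    by positivity, ?_, by positivity, ?_⟩
  · have : 1 / (-log k) ≤ 2 / (-log k) := by gcongr; norm_num
    linarith
  rintro ε ⟨hε, hεε₀⟩
  obtain ⟨hε_exp, hεc, hεc2⟩ : ε < exp (-1) ∧ ε < c ∧ ε < c ^ 2 := by
    simpa only [lt_min_iff] using hεε₀
  have hlog1 : 1 ≤ -log ε := by
    have := log_lt_log hε hε_exp
    rw [log_exp] at this
    linarith
  have hden : 0 < ε * -log ε := mul_pos hε (by linarith)
  rw [le_div_iff₀ hden, div_le_iff₀ hden]
  exact ⟨inv_neg_log_mul_le_nbdLength_linearOrbit hk0 hk1 hx₀ hε hεc.le hεc2.le,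
    nbdLength_linearOrbit_le_mul_neg_log hk0 hk1 hx₀.le hε hlog1⟩
end

section
/- Let f(x) = x^α with α > 1, g = id − f, x₀ ∈ (0,1) small, and S the orbit of x₀ under g. Then |A_ε(S)| ≍ ε^{1/α} as ε → 0, and consequently the box dimension of S equals 1 − 1/α. -/
open Set Filter Topology MeasureTheory

/-!
Under `y = x ^ (1 - α)` the recursion gives `y (n + 1) ≥ y n + (α - 1)` (Bernoulli's inequality
with a negative exponent), so fewer than `c ^ (1 - α) / (α - 1) + 1` points of the orbit exceed `c`.
Take `c = (2ε) ^ (1 / α)`. Below `c` the gaps `x n ^ α` are at most `2ε`, so the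
`ε`-neighbourhood covers `[0, x N]`, where `x N` is the first point below `c`, and `x N ≍ c`. Above
`c` the neighbourhood is covered by at most `c ^ (1 - α) / (α - 1) + 1` intervals of length `2ε`,
of total length `≲ ε c ^ (1 - α) ≍ c`. Hence `|A_ε(S)| ≍ ε ^ (1 / α)`, and then
`|A_ε(S)| / ε ^ (1 - s) → 0` holds exactly for `s > 1 - 1 / α`.
-/

open Metric

lemma one_add_mul_self_le_rpow_one_add_of_nonpos {s p : ℝ} (hs : -1 < s) (hp : p ≤ 0) :
    1 + p * s ≤ (1 + s) ^ p := by
  have hlog : Real.log (1 + s) ≤ s := by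
    linarith [Real.log_le_sub_one_of_pos (by linarith : 0 < 1 + s)]
  rw [Real.rpow_def_of_pos (by linarith)]
  nlinarith [Real.add_one_le_exp (Real.log (1 + s) * p),
    mul_nonneg (sub_nonneg.2 hlog) (neg_nonneg.2 hp)]

lemma mem_cthickening_pair_of_mem_Icc {a b t ε : ℝ} (ht : t ∈ Icc a b) (hab : b - a ≤ 2 * ε) :
    t ∈ cthickening ε {a, b} := by
  rcases le_total (t - a) ε with h | h
  · refine mem_cthickening_of_dist_le t a ε _ (mem_insert a _) ?_
    rw [Real.dist_eq, abs_le]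
    constructor <;> linarith [ht.1]
  · refine mem_cthickening_of_dist_le t b ε _ (mem_insert_of_mem a rfl) ?_
    rw [Real.dist_eq, abs_le]
    constructor <;> linarith [ht.2]

lemma Icc_subset_cthickening_range {x : ℕ → ℝ} {ε : ℝ} {N : ℕ} (hx : Antitone x)
    (hlim : Tendsto x atTop (𝓝 0)) (hgap : ∀ n ≥ N, x n - x (n + 1) ≤ 2 * ε) :
    Icc 0 (x N) ⊆ cthickening ε (range x) := by
  rintro t ⟨ht0, htN⟩
  rcases ht0.eq_or_lt with rfl | ht0
  · exact closure_subset_cthickening ε _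
      (mem_closure_of_tendsto hlim (Eventually.of_forall mem_range_self))
  have hex : ∃ m, x m < t := (hlim.eventually (gt_mem_nhds ht0)).exists
  have hNm : N < Nat.find hex :=
    lt_of_not_ge fun h => (Nat.find_spec hex).not_ge (htN.trans (hx h))
  obtain ⟨n, hn⟩ := Nat.exists_eq_succ_of_ne_zero (by omega : Nat.find hex ≠ 0)
  have htn : t ≤ x n := not_lt.1 (Nat.find_min hex (by omega))
  have htn1 : x (n + 1) < t := by simpa only [hn] using Nat.find_spec hex
  exact cthickening_subset_of_subset ε (pair_subset (mem_range_self _) (mem_range_self _))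
    (mem_cthickening_pair_of_mem_Icc ⟨htn1.le, htn⟩ (hgap n (by omega)))

lemma le_nbdLength_of_Icc_subset {U : Set ℝ} {a b ε : ℝ} (hU : Bornology.IsBounded U)
    (hab : a ≤ b) (h : Icc a b ⊆ cthickening ε U) : b - a ≤ nbdLength U ε := by
  have hvol : ENNReal.ofReal (b - a) ≤ volume (cthickening ε U) :=
    Real.volume_Icc ▸ measure_mono h
  rw [nbdLength, ← ENNReal.toReal_ofReal (sub_nonneg.2 hab)]
  exact ENNReal.toReal_mono hU.cthickening.measure_lt_top.ne hvol

lemma nbdLength_le_of_subset_union_Icc {U : Set ℝ} (F : Finset ℝ) {a b ε : ℝ} (hab : a ≤ b)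
    (hε : 0 ≤ ε) (hU : U ⊆ ↑F ∪ Icc a b) :
    nbdLength U ε ≤ b - a + 2 * ε + F.card * (2 * ε) := by
  have hcover : cthickening ε U ⊆ (⋃ y ∈ F, closedBall y ε) ∪ cthickening ε (Icc a b) := by
    rw [← Finset.set_biUnion_coe, ← F.finite_toSet.isCompact.cthickening_eq_biUnion_closedBall hε,
      ← cthickening_union]
    exact cthickening_subset_of_subset ε hU
  have hvol : volume (cthickening ε U) ≤
      F.card * ENNReal.ofReal (2 * ε) + ENNReal.ofReal (b - a + 2 * ε) :=
    calc volume (cthickening ε U)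
        ≤ ∑ y ∈ F, volume (closedBall y ε) + volume (cthickening ε (Icc a b)) :=
          (measure_mono hcover).trans ((measure_union_le _ _).trans
            (add_le_add (measure_biUnion_finset_le _ _) le_rfl))
      _ = F.card * ENNReal.ofReal (2 * ε) + ENNReal.ofReal (b - a + 2 * ε) := by
          rw [Real.Icc_eq_closedBall, cthickening_closedBall hε (by linarith)]
          simp only [Real.volume_closedBall, Finset.sum_const, nsmul_eq_mul]
          ring_nf
  refine ENNReal.toReal_le_of_le_ofReal (by positivity) (hvol.trans_eq ?_)
  rw [← ENNReal.ofReal_natCast, ← ENNReal.ofReal_mul (by positivity),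
    ← ENNReal.ofReal_add (by positivity) (by linarith)]
  ring_nf

lemma div_rpow_one_sub_eq {f ε : ℝ} (hε : 0 < ε) (d s : ℝ) :
    f / ε ^ (1 - s) = f / ε ^ d * ε ^ (s - (1 - d)) := by
  rw [show s - (1 - d) = d - (1 - s) by ring, Real.rpow_sub hε d,
    div_mul_div_cancel₀ (Real.rpow_pos_of_pos hε d).ne']

lemma setOf_tendsto_div_rpow_eq_Ioi {f : ℝ → ℝ} {d A B : ℝ} (hd : d ≤ 1) (hA : 0 < A)
    (hf : ∀ᶠ ε in 𝓝[>] 0, A ≤ f ε / ε ^ d ∧ f ε / ε ^ d ≤ B) :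
    {s : ℝ | 0 ≤ s ∧ Tendsto (fun ε => f ε / ε ^ (1 - s)) (𝓝[>] 0) (𝓝 0)} = Ioi (1 - d) := by
  have hsmall : ∀ᶠ ε in 𝓝[>] (0 : ℝ), ε ∈ Ioo 0 1 := Ioo_mem_nhdsGT one_pos
  ext s
  constructor
  · rintro ⟨-, hlim⟩
    show 1 - d < s
    by_contra! hs
    have hge : ∀ᶠ ε in 𝓝[>] (0 : ℝ), A ≤ f ε / ε ^ (1 - s) := by
      filter_upwards [hsmall, hf] with ε ⟨hε0, hε1⟩ hfε
      rw [div_rpow_one_sub_eq hε0 d]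
      have : 1 ≤ ε ^ (s - (1 - d)) :=
        Real.one_le_rpow_of_pos_of_le_one_of_nonpos hε0 hε1.le (by linarith)
      nlinarith [hfε.1]
    obtain ⟨ε, hAε, hεA⟩ := (hge.and (hlim.eventually (gt_mem_nhds hA))).exists
    exact hεA.not_ge hAε
  · intro hs
    refine ⟨by linarith [mem_Ioi.1 hs], ?_⟩
    have hpow : Tendsto (fun ε : ℝ => ε ^ (s - (1 - d))) (𝓝[>] 0) (𝓝 0) := by
      have := (Real.continuousAt_rpow_const 0 _ (Or.inr (sub_pos.2 hs).le)).tendsto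
      rw [Real.zero_rpow (sub_pos.2 hs).ne'] at this
      exact this.mono_left nhdsWithin_le_nhds
    refine squeeze_zero' ?_ ?_ (by simpa using hpow.const_mul B)
    · filter_upwards [hsmall, hf] with ε hε hfε
      rw [div_rpow_one_sub_eq hε.1 d]
      exact mul_nonneg (hA.le.trans hfε.1) (Real.rpow_nonneg hε.1.le _)
    · filter_upwards [hsmall, hf] with ε hε hfε
      rw [div_rpow_one_sub_eq hε.1 d]
      exact mul_le_mul_of_nonneg_right hfε.2 (Real.rpow_nonneg hε.1.le _)

section PowerOrbit

variable {α : ℝ} {x : ℕ → ℝ} (hα : 1 < α) (hx : x 0 ∈ Ioo 0 1)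
  (hrec : ∀ n, x (n + 1) = x n - x n ^ α)
include hα hx hrec

lemma orbit_mem_Ioo (n : ℕ) : x n ∈ Ioo 0 1 := by
  induction n with
  | zero => exact hx
  | succ n ih =>
    have hlt : x n ^ α < x n := by
      simpa using Real.rpow_lt_rpow_of_exponent_gt ih.1 ih.2 hα
    rw [hrec n]
    constructor <;> linarith [Real.rpow_pos_of_pos ih.1 α, ih.2]

lemma orbit_strictAnti : StrictAnti x :=
  strictAnti_nat_of_succ_lt fun n => by
    rw [hrec n]
    linarith [Real.rpow_pos_of_pos (orbit_mem_Ioo hα hx hrec n).1 α]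

lemma orbit_succ_eq_mul (n : ℕ) : x (n + 1) = x n * (1 - x n ^ (α - 1)) := by
  rw [hrec n, mul_sub, mul_one,
    ← Real.rpow_one_add' (orbit_mem_Ioo hα hx hrec n).1.le (by linarith)]
  ring_nf

lemma orbit_rpow_add_le (n : ℕ) : x n ^ (1 - α) + (α - 1) ≤ x (n + 1) ^ (1 - α) := by
  obtain ⟨hx0, hx1⟩ := orbit_mem_Ioo hα hx hrec n
  have ht1 : x n ^ (α - 1) < 1 := Real.rpow_lt_one hx0.le hx1 (by linarith)
  have hinv : x n ^ (1 - α) * x n ^ (α - 1) = 1 := by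
    rw [← Real.rpow_add hx0]
    norm_num
  have hbern : 1 + (1 - α) * -x n ^ (α - 1) ≤ (1 + -x n ^ (α - 1)) ^ (1 - α) :=
    one_add_mul_self_le_rpow_one_add_of_nonpos (by linarith) (by linarith)
  have hlin : x n ^ (1 - α) * (1 + (1 - α) * -x n ^ (α - 1)) = x n ^ (1 - α) + (α - 1) := by
    linear_combination (α - 1) * hinv
  rw [← sub_eq_add_neg] at hbern
  rw [orbit_succ_eq_mul hα hx hrec, Real.mul_rpow hx0.le (by linarith)]
  linarith [mul_le_mul_of_nonneg_left hbern (Real.rpow_pos_of_pos hx0 (1 - α)).le]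

lemma orbit_mul_le_rpow (n : ℕ) : (α - 1) * n ≤ x n ^ (1 - α) := by
  induction n with
  | zero => simpa using Real.rpow_nonneg hx.1.le _
  | succ n ih =>
    push_cast
    linarith [orbit_rpow_add_le hα hx hrec n]

lemma orbit_tendsto_zero : Tendsto x atTop (𝓝 0) := by
  have hy : Tendsto (fun n => x n ^ (1 - α)) atTop atTop :=
    tendsto_atTop_mono (orbit_mul_le_rpow hα hx hrec)
      (tendsto_natCast_atTop_atTop.const_mul_atTop (by linarith))
  have hα1 : α - 1 ≠ 0 := (sub_pos.2 hα).ne'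
  have hinv := (tendsto_rpow_neg_atTop (by positivity : 0 < (α - 1)⁻¹)).comp hy
  refine hinv.congr fun n => ?_
  rw [Function.comp_apply, ← Real.rpow_mul (orbit_mem_Ioo hα hx hrec n).1.le,
    show (1 - α) * -(α - 1)⁻¹ = 1 by field_simp; ring, Real.rpow_one]

lemma orbit_exists_crossing {c : ℝ} (hc0 : 0 < c) (hc : c < x 0) :
    ∃ M, c < x M ∧ x (M + 1) ≤ c := by
  have hex : ∃ n, x n ≤ c :=
    ((orbit_tendsto_zero hα hx hrec).eventually (ge_mem_nhds hc0)).exists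
  obtain ⟨M, hM⟩ := Nat.exists_eq_succ_of_ne_zero fun h : Nat.find hex = 0 =>
    hc.not_ge (h ▸ Nat.find_spec hex)
  exact ⟨M, not_le.1 (Nat.find_min hex (by omega)), by simpa [hM] using Nat.find_spec hex⟩

lemma isBounded_range_orbit : Bornology.IsBounded (range x) :=
  Metric.isBounded_Icc (0 : ℝ) 1 |>.subset <| range_subset_iff.2 fun n =>
    Ioo_subset_Icc_self (orbit_mem_Ioo hα hx hrec n)

lemma orbit_nbdLength_ge {c : ℝ} {M : ℕ} (hcM : c < x M) (hM : x (M + 1) ≤ c) :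
    (1 - x 0 ^ (α - 1)) * c ≤ nbdLength (range x) (c ^ α / 2) := by
  have hmem := orbit_mem_Ioo hα hx hrec
  have hanti := (orbit_strictAnti hα hx hrec).antitone
  have hgap : ∀ n ≥ M + 1, x n - x (n + 1) ≤ 2 * (c ^ α / 2) := fun n hn => by
    rw [hrec n, sub_sub_cancel, mul_div_cancel₀ _ two_ne_zero]
    exact Real.rpow_le_rpow (hmem n).1.le ((hanti hn).trans hM) (by linarith)
  have hfill := le_nbdLength_of_Icc_subset (isBounded_range_orbit hα hx hrec) (hmem _).1.le
    (Icc_subset_cthickening_range hanti (orbit_tendsto_zero hα hx hrec) hgap)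
  have hxM : x M ^ (α - 1) ≤ x 0 ^ (α - 1) :=
    Real.rpow_le_rpow (hmem M).1.le (hanti (Nat.zero_le M)) (by linarith)
  have hx0 : x 0 ^ (α - 1) < 1 := Real.rpow_lt_one hx.1.le hx.2 (by linarith)
  calc (1 - x 0 ^ (α - 1)) * c ≤ x M * (1 - x M ^ (α - 1)) := by nlinarith [(hmem M).1]
    _ = x (M + 1) := (orbit_succ_eq_mul hα hx hrec M).symm
    _ ≤ nbdLength (range x) (c ^ α / 2) := by linarith

lemma orbit_nbdLength_le {c : ℝ} {M : ℕ} (hc : 0 < c) (hcM : c < x M) (hM : x (M + 1) ≤ c) :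
    nbdLength (range x) (c ^ α / 2) ≤ α / (α - 1) * c + 2 * c ^ α := by
  have hmem := orbit_mem_Ioo hα hx hrec
  have hcover : range x ⊆ ↑((Finset.range (M + 1)).image x) ∪ Icc 0 (x (M + 1)) := by
    rintro _ ⟨n, rfl⟩
    rcases lt_or_ge n (M + 1) with hn | hn
    · exact Or.inl (Finset.mem_coe.2 (Finset.mem_image_of_mem x (Finset.mem_range.2 hn)))
    · exact Or.inr ⟨(hmem n).1.le, (orbit_strictAnti hα hx hrec).antitone hn⟩
  have hcα : 0 < c ^ α := Real.rpow_pos_of_pos hc α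
  have hcard : (((Finset.range (M + 1)).image x).card : ℝ) ≤ M + 1 := by
    exact_mod_cast Finset.card_image_le.trans (Finset.card_range _).le
  have hcount : (α - 1) * M * c ^ α < c := by
    have hlt : (α - 1) * M < c ^ (1 - α) := (orbit_mul_le_rpow hα hx hrec M).trans_lt
      (Real.rpow_lt_rpow_of_neg hc hcM (by linarith))
    calc (α - 1) * M * c ^ α < c ^ (1 - α) * c ^ α := mul_lt_mul_of_pos_right hlt hcα
      _ = c := by rw [← Real.rpow_add hc]; simp
  have hsplit : α / (α - 1) * c = c + c / (α - 1) := by field_simp [(sub_pos.2 hα).ne']; ring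
  have hM' : (M : ℝ) * c ^ α ≤ c / (α - 1) := by
    rw [le_div_iff₀ (by linarith)]
    linarith
  calc nbdLength (range x) (c ^ α / 2)
      ≤ x (M + 1) - 0 + 2 * (c ^ α / 2)
          + ((Finset.range (M + 1)).image x).card * (2 * (c ^ α / 2)) :=
        nbdLength_le_of_subset_union_Icc _ (hmem _).1.le (by positivity) hcover
    _ ≤ c + c ^ α + (M + 1) * c ^ α := by
        linarith [mul_le_mul_of_nonneg_right hcard hcα.le]
    _ ≤ α / (α - 1) * c + 2 * c ^ α := by linarith

lemma exists_bounds_nbdLength_orbit_div_rpow :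
    ∃ A B : ℝ, 0 < A ∧ A ≤ B ∧ ∀ᶠ ε in 𝓝[>] (0 : ℝ),
      A ≤ nbdLength (range x) ε / ε ^ (1 / α) ∧ nbdLength (range x) ε / ε ^ (1 / α) ≤ B := by
  have hα0 : 0 < α := by linarith
  have hx0 : x 0 ^ (α - 1) < 1 := Real.rpow_lt_one hx.1.le hx.2 (by linarith)
  have hK : 0 < (2 : ℝ) ^ (1 / α) := by positivity
  have hαα : 1 ≤ α / (α - 1) := (one_le_div (by linarith)).2 (by linarith)
  refine ⟨(1 - x 0 ^ (α - 1)) * 2 ^ (1 / α), α / (α - 1) * 2 ^ (1 / α) + 4, by nlinarith,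
    by nlinarith [Real.rpow_nonneg hx.1.le (α - 1)], ?_⟩
  have hδ : 0 < min 1 (x 0 ^ α / 2) := lt_min one_pos (by linarith [Real.rpow_pos_of_pos hx.1 α])
  filter_upwards [Ioo_mem_nhdsGT hδ] with ε ⟨hε0, hεδ⟩
  have hε2 : 2 * ε < x 0 ^ α := by linarith [min_le_right 1 (x 0 ^ α / 2)]
  have hε1 : ε ≤ 1 := by linarith [min_le_left 1 (x 0 ^ α / 2)]
  set c := (2 * ε) ^ (1 / α) with hc
  have hc0 : 0 < c := by positivity
  have hcα : c ^ α / 2 = ε := by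
    rw [hc, ← Real.rpow_mul (by positivity), one_div_mul_cancel hα0.ne', Real.rpow_one]
    ring
  have hcx : c < x 0 := by
    rwa [hc, one_div, Real.rpow_inv_lt_iff_of_pos (by positivity) hx.1.le hα0]
  have hcε : c = 2 ^ (1 / α) * ε ^ (1 / α) := Real.mul_rpow (by norm_num) hε0.le
  obtain ⟨M, hcM, hM⟩ := orbit_exists_crossing hα hx hrec hc0 hcx
  have hlow := orbit_nbdLength_ge hα hx hrec hcM hM
  have hupp := orbit_nbdLength_le hα hx hrec hc0 hcM hM
  rw [hcα] at hlow hupp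
  have hεpow : ε ≤ ε ^ (1 / α) :=
    Real.self_le_rpow_of_le_one hε0.le hε1 ((div_le_one hα0).2 hα.le)
  have hpos : 0 < ε ^ (1 / α) := by positivity
  constructor
  · rw [le_div_iff₀ hpos]
    linarith [hcε ▸ hlow]
  · rw [div_le_iff₀ hpos]
    nlinarith

end PowerOrbit

/-- For `f(x) = x^α`, `α > 1`, and the orbit of `g = id − f` starting at `x₀ ∈ (0,1)`:
`|A_ε(S)| ≍ ε^{1/α}` as `ε → 0`, and the box dimension of `S` is `1 − 1/α`. -/
theorem power_orbit_box_dimension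
    (α x₀ : ℝ) (hα : 1 < α) (hx₀ : x₀ ∈ Ioo (0:ℝ) 1)
    (x : ℕ → ℝ) (hx0 : x 0 = x₀)
    (hrec : ∀ n, x (n + 1) = x n - x n ^ α) :
    (∃ A B : ℝ, 0 < A ∧ A ≤ B ∧ ∀ᶠ ε in 𝓝[>] (0:ℝ),
      A ≤ nbdLength (Set.range x) ε / ε ^ (1 / α) ∧
      nbdLength (Set.range x) ε / ε ^ (1 / α) ≤ B) ∧
    sInf {s : ℝ | 0 ≤ s ∧
        Tendsto (fun ε => nbdLength (Set.range x) ε / ε ^ (1 - s)) (𝓝[>] 0) (𝓝 0)}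
      = 1 - 1 / α := by
  subst hx0
  obtain ⟨A, B, hA, hAB, hbounds⟩ := exists_bounds_nbdLength_orbit_div_rpow hα hx₀ hrec
  refine ⟨⟨A, B, hA, hAB, hbounds⟩, ?_⟩
  rw [setOf_tendsto_div_rpow_eq_Ioi ((div_le_one (by linarith)).2 hα.le) hA hbounds, csInf_Ioi]
end

section
/- Let f : [0,d) → ℝ be continuous, C¹ on (0,d), positive on (0,d), with f(0) = 0, f'(0⁺) = 0 (i.e., lim_{x→0⁺} f'(x) = 0), and f(x) < x on (0,d). Let x_{n+1} = x_n − f(x_n) with x₀ ∈ (0,d). Then the sequence (x_n) is strictly decreasing, converges to 0, and lim_{n→∞} f(x_n)/f(x_{n-1}) = 1. -/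
/-!
The orbit stays in `(0, d)` and decreases, so it converges; its limit is a fixed point of
`y ↦ y - f y`, i.e. a zero of `f`, and `f > 0` on `(0, d)` forces the limit to be `0`.
By the mean value theorem, `f (x (n+1)) / f (x n) = 1 - f' ξₙ` with `x (n+1) < ξₙ < x n`,
and `ξₙ → 0⁺` gives `f' ξₙ → 0`.
-/

open Set Filter Topology

theorem exists_mem_Ioo_div_eq_one_sub_deriv {f : ℝ → ℝ} {y : ℝ} (hfy : 0 < f y)
    (hf : DifferentiableOn ℝ f (Icc (y - f y) y)) :
    ∃ c ∈ Ioo (y - f y) y, f (y - f y) / f y = 1 - deriv f c := by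
  obtain ⟨c, hc, hslope⟩ := exists_deriv_eq_slope f (sub_lt_self y hfy) hf.continuousOn
    (hf.mono Ioo_subset_Icc_self)
  refine ⟨c, hc, ?_⟩
  rw [hslope, sub_sub_cancel]
  field_simp
  ring

section Orbit

variable {d : ℝ} {f : ℝ → ℝ} {x : ℕ → ℝ}

theorem orbit_mem_Ioo_s14 (hfpos : ∀ y ∈ Ioo 0 d, 0 < f y) (hflt : ∀ y ∈ Ioo 0 d, f y < y)
    (hx0 : x 0 ∈ Ioo 0 d) (hrec : ∀ n, x (n + 1) = x n - f (x n)) (n : ℕ) :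
    x n ∈ Ioo 0 d := by
  induction n with
  | zero => exact hx0
  | succ n ih =>
    rw [hrec]
    have hlt := hflt _ ih
    have hpos := hfpos _ ih
    constructor <;> linarith [ih.2]

theorem orbit_strictAnti_s14 (hfpos : ∀ y ∈ Ioo 0 d, 0 < f y) (hmem : ∀ n, x n ∈ Ioo 0 d)
    (hrec : ∀ n, x (n + 1) = x n - f (x n)) : StrictAnti x :=
  strictAnti_nat_of_succ_lt fun n => by
    rw [hrec]
    exact sub_lt_self _ (hfpos _ (hmem n))

theorem orbit_tendsto_zero_s14 (hfc : ContinuousOn f (Ioo 0 d))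
    (hfpos : ∀ y ∈ Ioo 0 d, 0 < f y) (hmem : ∀ n, x n ∈ Ioo 0 d)
    (hrec : ∀ n, x (n + 1) = x n - f (x n)) : Tendsto x atTop (𝓝 0) := by
  have hbdd : BddBelow (range x) := ⟨0, by rintro _ ⟨n, rfl⟩; exact (hmem n).1.le⟩
  have hlim : Tendsto x atTop (𝓝 (⨅ n, x n)) :=
    tendsto_atTop_ciInf (orbit_strictAnti_s14 hfpos hmem hrec).antitone hbdd
  set L := ⨅ n, x n
  suffices hL : L = 0 by rwa [hL] at hlim
  by_contra hL
  have hLmem : L ∈ Ioo 0 d :=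
    ⟨(le_ciInf fun n => (hmem n).1.le).lt_of_ne' hL, (ciInf_le hbdd 0).trans_lt (hmem 0).2⟩
  have hfixed : L = L - f L := by
    refine tendsto_nhds_unique (hlim.comp (tendsto_add_atTop_nat 1)) ?_
    simp only [Function.comp_def, hrec]
    exact hlim.sub ((hfc.continuousAt (isOpen_Ioo.mem_nhds hLmem)).tendsto.comp hlim)
  linarith [hfpos L hLmem]

end Orbit

theorem orbit_ratio_tendsto_one_general
    (d : ℝ) (f : ℝ → ℝ)
    (hf : ContDiffOn ℝ 1 f (Ioo 0 d))
    (hfpos : ∀ x ∈ Ioo 0 d, 0 < f x)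
    (hf'0 : Tendsto (deriv f) (𝓝[>] 0) (𝓝 0))
    (hflt : ∀ x ∈ Ioo 0 d, f x < x)
    (x : ℕ → ℝ) (hx0 : x 0 ∈ Ioo 0 d)
    (hrec : ∀ n, x (n + 1) = x n - f (x n)) :
    StrictAnti x ∧ Tendsto x atTop (𝓝 0) ∧
    Tendsto (fun n => f (x (n + 1)) / f (x n)) atTop (𝓝 1) := by
  have hdiff : DifferentiableOn ℝ f (Ioo 0 d) := hf.differentiableOn one_ne_zero
  have hmem := orbit_mem_Ioo_s14 hfpos hflt hx0 hrec
  have hlim := orbit_tendsto_zero_s14 hdiff.continuousOn hfpos hmem hrec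
  refine ⟨orbit_strictAnti_s14 hfpos hmem hrec, hlim, ?_⟩
  have hmvt : ∀ n, ∃ c ∈ Ioo (x (n + 1)) (x n), f (x (n + 1)) / f (x n) = 1 - deriv f c := by
    intro n
    have hIcc : Icc (x (n + 1)) (x n) ⊆ Ioo 0 d :=
      Icc_subset_Ioo (hmem (n + 1)).1 (hmem n).2
    rw [hrec] at hIcc ⊢
    exact exists_mem_Ioo_div_eq_one_sub_deriv (hfpos _ (hmem n)) (hdiff.mono hIcc)
  choose c hc hratio using hmvt
  have hc0 : Tendsto c atTop (𝓝[>] 0) := by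
    refine tendsto_nhdsWithin_of_tendsto_nhds_of_eventually_within _ ?_
      (Eventually.of_forall fun n => (hmem (n + 1)).1.trans (hc n).1)
    exact tendsto_of_tendsto_of_tendsto_of_le_of_le
      (hlim.comp (tendsto_add_atTop_nat 1)) hlim (fun n => (hc n).1.le) (fun n => (hc n).2.le)
  simpa [hratio] using tendsto_const_nhds.sub (hf'0.comp hc0)

/-- For `f` continuous on `[0,d)`, `C¹` and positive on `(0,d)`, with `f(0) = 0`,
`f'(0⁺) = 0` and `f(x) < x`, the orbit `x_{n+1} = x_n − f(x_n)` strictly decreases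
to `0` and `f(x_{n+1})/f(x_n) → 1`. -/
theorem orbit_ratio_tendsto_one
    (d : ℝ) (hd : 0 < d) (f : ℝ → ℝ)
    (hfc : ContinuousOn f (Ico 0 d)) (hf : ContDiffOn ℝ 1 f (Ioo 0 d))
    (hfpos : ∀ x ∈ Ioo 0 d, 0 < f x) (hf0 : f 0 = 0)
    (hf'0 : Tendsto (deriv f) (𝓝[>] 0) (𝓝 0))
    (hflt : ∀ x ∈ Ioo 0 d, f x < x)
    (x : ℕ → ℝ) (hx0 : x 0 ∈ Ioo 0 d)
    (hrec : ∀ n, x (n + 1) = x n - f (x n)) :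
    StrictAnti x ∧ Tendsto x atTop (𝓝 0) ∧
    Tendsto (fun n => f (x (n + 1)) / f (x n)) atTop (𝓝 1) :=
  orbit_ratio_tendsto_one_general d f hf hfpos hf'0 hflt x hx0 hrec
end
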